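/- For the edged cube Q̄_L, the following are equivalent for any basic sequence: (i) it is convergent over the solved configuration f_solved; (ii) it is universally convergent; (iii) it is twist-finite. -/

import Mathlib

/-!
A basic twist moves a cell only by rotating it about an axis, so each cell is moved by just nine
basic twists.  If the sequence is twist-finite, every cell is therefore moved finitely often, its
position settles at every limit stage, and every legal initial labelling converges.

Otherwise let `λ` be the least stage before which some twist occurs infinitely often; `λ` is a
limit and some basic twist occurs cofinally below it, so a cell `c` it moves has no stable origin
at `λ`.  A non-color, once present, never disappears: twists permute the finite windows of
cells with the same unsigned coordinates.  Over the identity labelling `c` itself is a non-color at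
`λ`.  Over the solved configuration, choose `c` with a coupled partner `c'`: the pair of origins
of `(c, c')` is determined by its two face colors, its unsigned coordinates and a chirality sign,
and the last two are twist invariants; so if the colors settled at `λ`, the origin of `c` would
settle too.
-/

universe u v

namespace InfRubik

/-- The three axes of the cube. -/
inductive Axis : Type
  | x | y | z
  deriving DecidableEq

/-- The six colors of the Rubik's cube.  A *configuration* is a map from cells to
`Option Color`, where `none` plays the role of the non-color `NaC`. -/
inductive Color : Type
  | red | white | green | orange | yellow | blue
  deriving DecidableEq

/-- The set `L̄† = -L ∪ {0} ∪ L ∪ {±∞}` of extended coordinates. -/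
inductive ExtCoord (L : Type u) : Type u
  | neg : L → ExtCoord L
  | zero : ExtCoord L
  | pos : L → ExtCoord L
  | negInf : ExtCoord L
  | posInf : ExtCoord L

namespace ExtCoord

variable {L : Type u}

/-- The reflection `r ↦ -r`. -/
def reflect : ExtCoord L → ExtCoord L
  | .neg r => .pos r
  | .zero => .zero
  | .pos r => .neg r
  | .negInf => .posInf
  | .posInf => .negInf

@[simp] theorem reflect_reflect (a : ExtCoord L) : a.reflect.reflect = a := by
  cases a <;> rfl

/-- Whether a coordinate is `±∞`. -/
def isInfB : ExtCoord L → Bool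
  | .negInf => true
  | .posInf => true
  | _ => false

@[simp] theorem isInfB_reflect (a : ExtCoord L) : a.reflect.isInfB = a.isInfB := by
  cases a <;> rfl

/-- Whether a coordinate is `0`. -/
def isZeroB : ExtCoord L → Bool
  | .zero => true
  | _ => false

@[simp] theorem isZeroB_reflect (a : ExtCoord L) : a.reflect.isZeroB = a.isZeroB := by
  cases a <;> rfl

end ExtCoord

/-- A point of the ambient space `L̄† × L̄† × L̄†`. -/
abbrev Triple (L : Type u) := ExtCoord L × ExtCoord L × ExtCoord L

/-- The coordinate of a point along an axis. -/
def Triple.coord {L : Type u} : Axis → Triple L → ExtCoord L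
  | .x, p => p.1
  | .y, p => p.2.1
  | .z, p => p.2.2

/-- Quarter-turn rotation of the ambient space about an axis (right-hand rule). -/
def rot {L : Type u} : Axis → Triple L → Triple L
  | .x, p => (p.1, p.2.2.reflect, p.2.1)
  | .y, p => (p.2.2, p.2.1, p.1.reflect)
  | .z, p => (p.2.1.reflect, p.1, p.2.2)

/-- Inverse quarter-turn rotation of the ambient space about an axis. -/
def rotInv {L : Type u} : Axis → Triple L → Triple L
  | .x, p => (p.1, p.2.2, p.2.1.reflect)
  | .y, p => (p.2.2.reflect, p.2.1, p.1)
  | .z, p => (p.2.1, p.1.reflect, p.2.2)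

@[simp] theorem rotInv_rot {L : Type u} (i : Axis) (p : Triple L) : rotInv i (rot i p) = p := by
  cases i <;> simp [rot, rotInv]

@[simp] theorem rot_rotInv {L : Type u} (i : Axis) (p : Triple L) : rot i (rotInv i p) = p := by
  cases i <;> simp [rot, rotInv]

/-- The number of infinite coordinates of a point. -/
def infCount {L : Type u} (p : Triple L) : ℕ :=
  (if p.1.isInfB then 1 else 0) + (if p.2.1.isInfB then 1 else 0) +
    (if p.2.2.isInfB then 1 else 0)

/-- The number of zero coordinates of a point. -/
def zeroCount {L : Type u} (p : Triple L) : ℕ :=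
  (if p.1.isZeroB then 1 else 0) + (if p.2.1.isZeroB then 1 else 0) +
    (if p.2.2.isZeroB then 1 else 0)

theorem infCount_rot {L : Type u} (i : Axis) (p : Triple L) : infCount (rot i p) = infCount p := by
  obtain ⟨a, b, c⟩ := p
  cases i <;> cases ha : a.isInfB <;> cases hb : b.isInfB <;> cases hc : c.isInfB <;>
    simp [rot, infCount, ha, hb, hc]

theorem infCount_rotInv {L : Type u} (i : Axis) (p : Triple L) :
    infCount (rotInv i p) = infCount p := by
  obtain ⟨a, b, c⟩ := p
  cases i <;> cases ha : a.isInfB <;> cases hb : b.isInfB <;> cases hc : c.isInfB <;>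
    simp [rotInv, infCount, ha, hb, hc]

@[simp] theorem coord_rot_self {L : Type u} (i : Axis) (p : Triple L) :
    (rot i p).coord i = p.coord i := by
  cases i <;> rfl

@[simp] theorem coord_rotInv_self {L : Type u} (i : Axis) (p : Triple L) :
    (rotInv i p).coord i = p.coord i := by
  cases i <;> rfl

/-- A cell of the *edgeless* cube `Q_L`: a point of the ambient space with exactly one
infinite coordinate. -/
def Cell (L : Type u) : Type u := {p : Triple L // infCount p = 1}

open Classical in
/-- The underlying map on points of the quarter-turn twist `T_{i,α}`. -/
noncomputable def qtTriple {L : Type u} (i : Axis) (α : ExtCoord L) (p : Triple L) : Triple L :=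
  if p.coord i = α then rot i p else p

open Classical in
/-- The underlying map on points of the inverse quarter-turn twist `T_{i,α}⁻¹`. -/
noncomputable def qtTripleInv {L : Type u} (i : Axis) (α : ExtCoord L) (p : Triple L) : Triple L :=
  if p.coord i = α then rotInv i p else p

theorem qtTripleInv_qtTriple {L : Type u} (i : Axis) (α : ExtCoord L) (p : Triple L) :
    qtTripleInv i α (qtTriple i α p) = p := by
  classical
  by_cases h : p.coord i = α <;> simp [qtTriple, qtTripleInv, h]

theorem qtTriple_qtTripleInv {L : Type u} (i : Axis) (α : ExtCoord L) (p : Triple L) :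
    qtTriple i α (qtTripleInv i α p) = p := by
  classical
  by_cases h : p.coord i = α <;> simp [qtTriple, qtTripleInv, h]

theorem infCount_qtTriple {L : Type u} (i : Axis) (α : ExtCoord L) (p : Triple L) :
    infCount (qtTriple i α p) = infCount p := by
  classical
  by_cases h : p.coord i = α <;> simp [qtTriple, h, infCount_rot]

theorem infCount_qtTripleInv {L : Type u} (i : Axis) (α : ExtCoord L) (p : Triple L) :
    infCount (qtTripleInv i α p) = infCount p := by
  classical
  by_cases h : p.coord i = α <;> simp [qtTripleInv, h, infCount_rotInv]

/-- The quarter-turn twist `T_{i,α}` of the edgeless cube, as a permutation of cells. -/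
noncomputable def quarterTurn {L : Type u} (i : Axis) (α : ExtCoord L) : Equiv.Perm (Cell L) where
  toFun c := ⟨qtTriple i α c.1, by rw [infCount_qtTriple]; exact c.2⟩
  invFun c := ⟨qtTripleInv i α c.1, by rw [infCount_qtTripleInv]; exact c.2⟩
  left_inv c := Subtype.ext (qtTripleInv_qtTriple i α c.1)
  right_inv c := Subtype.ext (qtTriple_qtTripleInv i α c.1)

/-- The basic twists of the edgeless cube: quarter turns, half turns and reverse
quarter turns of a single layer. -/
def IsBasic (L : Type u) (π : Equiv.Perm (Cell L)) : Prop :=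
  ∃ (i : Axis) (α : ExtCoord L),
    π = quarterTurn i α ∨ π = quarterTurn i α ^ 2 ∨ π = (quarterTurn i α)⁻¹

/-! ### The edged cube -/

/-- How a quarter-turn about axis `i` transports the face tag of a cell. -/
def tagMap : Axis → Axis → Axis
  | .x, .x => .x
  | .x, .y => .z
  | .x, .z => .y
  | .y, .x => .z
  | .y, .y => .y
  | .y, .z => .x
  | .z, .x => .y
  | .z, .y => .x
  | .z, .z => .z

@[simp] theorem tagMap_tagMap (i j : Axis) : tagMap i (tagMap i j) = j := by
  cases i <;> cases j <;> rfl

theorem isInfB_coord_tagMap_rot {L : Type u} (i j : Axis) (p : Triple L) :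
    ((rot i p).coord (tagMap i j)).isInfB = (p.coord j).isInfB := by
  cases i <;> cases j <;> simp [rot, Triple.coord, tagMap]

theorem isInfB_coord_tagMap_rotInv {L : Type u} (i j : Axis) (p : Triple L) :
    ((rotInv i p).coord (tagMap i j)).isInfB = (p.coord j).isInfB := by
  cases i <;> cases j <;> simp [rotInv, Triple.coord, tagMap]

/-- A cell of the *edged* cube `Q̄_L`: a point of the ambient space together with a tag
naming an axis, such that the coordinate along the tagged axis is infinite (the tag
indicates the face to which the cell belongs). -/
def ECell (L : Type u) : Type u := {q : Triple L × Axis // (q.1.coord q.2).isInfB = true}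

open Classical in
/-- The underlying map of the quarter-turn twist `T_{i,α}` of the edged cube. -/
noncomputable def eqtFun {L : Type u} (i : Axis) (α : ExtCoord L) (q : Triple L × Axis) :
    Triple L × Axis :=
  if q.1.coord i = α then (rot i q.1, tagMap i q.2) else q

open Classical in
/-- The underlying map of the reverse quarter-turn twist of the edged cube. -/
noncomputable def eqtFunInv {L : Type u} (i : Axis) (α : ExtCoord L) (q : Triple L × Axis) :
    Triple L × Axis :=
  if q.1.coord i = α then (rotInv i q.1, tagMap i q.2) else q

theorem eqtFunInv_eqtFun {L : Type u} (i : Axis) (α : ExtCoord L) (q : Triple L × Axis) :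
    eqtFunInv i α (eqtFun i α q) = q := by
  classical
  by_cases h : q.1.coord i = α <;> simp [eqtFun, eqtFunInv, h]

theorem eqtFun_eqtFunInv {L : Type u} (i : Axis) (α : ExtCoord L) (q : Triple L × Axis) :
    eqtFun i α (eqtFunInv i α q) = q := by
  classical
  by_cases h : q.1.coord i = α <;> simp [eqtFun, eqtFunInv, h]

theorem isInfB_eqtFun {L : Type u} (i : Axis) (α : ExtCoord L) (q : Triple L × Axis) :
    (((eqtFun i α q).1.coord (eqtFun i α q).2)).isInfB = ((q.1.coord q.2)).isInfB := by
  classical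
  by_cases h : q.1.coord i = α <;> simp [eqtFun, h, isInfB_coord_tagMap_rot]

theorem isInfB_eqtFunInv {L : Type u} (i : Axis) (α : ExtCoord L) (q : Triple L × Axis) :
    (((eqtFunInv i α q).1.coord (eqtFunInv i α q).2)).isInfB = ((q.1.coord q.2)).isInfB := by
  classical
  by_cases h : q.1.coord i = α <;> simp [eqtFunInv, h, isInfB_coord_tagMap_rotInv]

/-- The quarter-turn twist `T_{i,α}` of the edged cube, as a permutation of cells.  A face
twist moves, besides the cells of its face, also the coupled edge and corner cells of the
adjacent faces lying in the twisted layer. -/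
noncomputable def equarterTurn {L : Type u} (i : Axis) (α : ExtCoord L) :
    Equiv.Perm (ECell L) where
  toFun c := ⟨eqtFun i α c.1, by rw [isInfB_eqtFun]; exact c.2⟩
  invFun c := ⟨eqtFunInv i α c.1, by rw [isInfB_eqtFunInv]; exact c.2⟩
  left_inv c := Subtype.ext (eqtFunInv_eqtFun i α c.1)
  right_inv c := Subtype.ext (eqtFun_eqtFunInv i α c.1)

/-- The basic twists of the edged cube. -/
def IsEBasic (L : Type u) (π : Equiv.Perm (ECell L)) : Prop :=
  ∃ (i : Axis) (α : ExtCoord L),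
    π = equarterTurn i α ∨ π = equarterTurn i α ^ 2 ∨ π = (equarterTurn i α)⁻¹

/-! ### Transfinite sequences of twists and their action on labellings -/

open Classical in
/-- The eventual value of an ordinal-indexed family of `Option`-values: `some v` if the family
stabilizes on `some v` before `lam`, and `none` otherwise. -/
noncomputable def eventualVal {X : Type u} (lam : Ordinal.{v})
    (g : ∀ η, η < lam → Option X) : Option X :=
  if h : ∃ v : X, ∃ γ, γ < lam ∧ ∀ η (hη : η < lam), γ ≤ η → g η hη = some v
  then some h.choose else none

/-- Applying an ordinal-indexed sequence of permutations to an initial labelling: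
`run σ f0 θ` is the labelling obtained after the first `θ` moves, with
`f_{η+1}(c) = f_η(σ_η⁻¹ c)` at successors and the eventual value (or `NaC = none`)
at limits. -/
noncomputable def run {Cl : Type v} {X : Type u} (σ : Ordinal.{v} → Equiv.Perm Cl)
    (f0 : Cl → Option X) (θ : Ordinal.{v}) : Cl → Option X :=
  Ordinal.limitRecOn (motive := fun _ => Cl → Option X) θ f0
    (fun η fη c => fη ((σ η)⁻¹ c))
    (fun lam _ prev c => eventualVal lam (fun η h => prev η h c))

/-- A (transfinite) sequence of twists of length `len`, each of which satisfies the
predicate `B` (being a basic twist). -/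
structure TwistSeq (Cl : Type v) (B : Equiv.Perm Cl → Prop) : Type (v + 1) where
  len : Ordinal.{v}
  seq : Ordinal.{v} → Equiv.Perm Cl
  basic : ∀ η, η < len → B (seq η)

namespace TwistSeq

variable {Cl : Type v} {B : Equiv.Perm Cl → Prop}

/-- The terminal labelling obtained by applying a sequence of twists to `f0`. -/
noncomputable def terminal (s : TwistSeq Cl B) {X : Type u} (f0 : Cl → Option X) :
    Cl → Option X :=
  run s.seq f0 s.len

/-- A sequence of twists is convergent over `f0` if the terminal labelling is legal,
i.e. never takes the value `NaC = none`. -/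
def ConvOver (s : TwistSeq Cl B) {X : Type u} (f0 : Cl → Option X) : Prop :=
  ∀ c, s.terminal f0 c ≠ none

/-- A sequence of twists is universally convergent if it is convergent over the identity
labelling. -/
def UnivConv (s : TwistSeq Cl B) : Prop := s.ConvOver (fun c => some c)

/-- A sequence is twist-finite if each twist occurs in it only finitely many times. -/
def TwistFinite (s : TwistSeq Cl B) : Prop :=
  ∀ π : Equiv.Perm Cl, {η : Ordinal | η < s.len ∧ s.seq η = π}.Finite

/-- Two sequences are equivalent, `σ⃗ ∼ τ⃗`, when they produce the same terminal
configuration over every initial configuration. -/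
def Sim (s t : TwistSeq Cl B) : Prop :=
  ∀ f : Cl → Option Color, s.terminal f = t.terminal f

/-- Concatenation of twist sequences: `s.concat t` performs `s` and then `t`. -/
noncomputable def concat (s t : TwistSeq Cl B) : TwistSeq Cl B where
  len := s.len + t.len
  seq := fun η => if η < s.len then s.seq η else t.seq (η - s.len)
  basic := by
    intro η hη
    by_cases h : η < s.len
    · simpa [h] using s.basic η h
    · have hc : 0 < t.len := by
        rcases eq_zero_or_pos t.len with h0 | h0
        · rw [h0, add_zero] at hη; exact absurd hη h
        · exact h0
      have h2 : η - s.len < t.len := Ordinal.sub_lt_of_lt_add hη hc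
      simpa [h] using t.basic _ h2

/-- The empty sequence of twists. -/
def empty (Cl : Type v) (B : Equiv.Perm Cl → Prop) : TwistSeq Cl B where
  len := 0
  seq := fun _ => 1
  basic := fun η hη => absurd hη (by simp)

/-- `n`-fold self-concatenation of a sequence of twists. -/
noncomputable def npow (s : TwistSeq Cl B) : ℕ → TwistSeq Cl B
  | 0 => empty Cl B
  | n + 1 => (npow s n).concat s

end TwistSeq

/-- Basic sequences of twists of the edgeless cube `Q_L`. -/
abbrev BasicSeq (L : Type u) := TwistSeq (Cell L) (IsBasic L)

/-- Basic sequences of twists of the edged cube `Q̄_L`. -/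
abbrev EBasicSeq (L : Type u) := TwistSeq (ECell L) (IsEBasic L)

/-- `f` is accessible from `f0` when some basic sequence applied to `f0` is convergent with
terminal configuration `f`. -/
def Accessible {Cl : Type v} (B : Equiv.Perm Cl → Prop) (f0 f : Cl → Option Color) : Prop :=
  ∃ s : TwistSeq Cl B, s.ConvOver f0 ∧ s.terminal f0 = f

/-- A labelling is legal if it never takes the value `NaC = none`. -/
def IsLegal {Cl : Type v} {X : Type u} (f : Cl → Option X) : Prop := ∀ c, f c ≠ none

/-! ### Clusters, faces, and distinguished configurations -/

/-- The group of permutations of cells of the edgeless cube generated by the basic twists. -/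
def twistGroup (L : Type u) : Subgroup (Equiv.Perm (Cell L)) :=
  Subgroup.closure {π | IsBasic L π}

/-- The cluster of a cell of the edgeless cube: its orbit under the group generated by the
basic twists. -/
def cluster {L : Type u} (c : Cell L) : Set (Cell L) :=
  {d | ∃ g ∈ twistGroup L, g c = d}

/-- The group of permutations of cells of the edged cube generated by the basic twists. -/
def etwistGroup (L : Type u) : Subgroup (Equiv.Perm (ECell L)) :=
  Subgroup.closure {π | IsEBasic L π}

/-- The cluster of a cell of the edged cube. -/
def ecluster {L : Type u} (c : ECell L) : Set (ECell L) :=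
  {d | ∃ g ∈ etwistGroup L, g c = d}

open Classical in
/-- The solved configuration of the edgeless cube: each face gets one of six distinct
colors. -/
noncomputable def fSolved (L : Type u) : Cell L → Option Color := fun c =>
  if c.1.1 = ExtCoord.posInf then some .red
  else if c.1.1 = ExtCoord.negInf then some .orange
  else if c.1.2.1 = ExtCoord.posInf then some .blue
  else if c.1.2.1 = ExtCoord.negInf then some .green
  else if c.1.2.2 = ExtCoord.posInf then some .white
  else some .yellow

/-- The color of each face: the face is named by the axis and the sign (`true` = `+∞`). -/
def faceColor : Axis → Bool → Color
  | .x, true => .red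
  | .x, false => .orange
  | .y, true => .blue
  | .y, false => .green
  | .z, true => .white
  | .z, false => .yellow

open Classical in
/-- The solved configuration of the edged cube. -/
noncomputable def efSolved (L : Type u) : ECell L → Option Color := fun c =>
  if c.1.1.coord c.1.2 = ExtCoord.posInf then some (faceColor c.1.2 true)
  else some (faceColor c.1.2 false)

/-- A center cell of the edgeless cube: two of its coordinates are `0`. -/
def IsCenter {L : Type u} (c : Cell L) : Prop := zeroCount c.1 = 2

/-- The global rotation of the whole cube about an axis, as a permutation of the cells of
the edgeless cube. -/
def rotAllPerm {L : Type u} (i : Axis) : Equiv.Perm (Cell L) where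
  toFun c := ⟨rot i c.1, by rw [infCount_rot]; exact c.2⟩
  invFun c := ⟨rotInv i c.1, by rw [infCount_rotInv]; exact c.2⟩
  left_inv c := Subtype.ext (rotInv_rot i c.1)
  right_inv c := Subtype.ext (rot_rotInv i c.1)

/-- The group of global rotations of the edgeless cube. -/
def rotGroup (L : Type u) : Subgroup (Equiv.Perm (Cell L)) :=
  Subgroup.closure (Set.range (rotAllPerm (L := L)))

/-- A configuration of the edgeless cube is standard if every non-center cluster contains
exactly four cells of each of the six colors, and its restriction to the center cluster is
obtained from the solved configuration by a global rotation of the cube. -/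
def Standard {L : Type u} (f : Cell L → Option Color) : Prop :=
  (∀ c : Cell L, ¬IsCenter c → ∀ γ : Color, {d ∈ cluster c | f d = some γ}.ncard = 4) ∧
  ∃ g ∈ rotGroup L, ∀ d : Cell L, IsCenter d → f d = fSolved L (g⁻¹ d)

/-- A configuration is invariant under all quarter-turn face twists. -/
def FaceInvariant {L : Type u} (f : Cell L → Option Color) : Prop :=
  ∀ (i : Axis) (α : ExtCoord L), α.isInfB = true →
    ∀ c : Cell L, f ((quarterTurn i α)⁻¹ c) = f c

/-! ### Quadrants and cluster configurations -/

/-- The upper-right quadrant `D` of the Front face: the cells `(x, y, +∞)` with `x ∈ L`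
and `y ∈ {0} ∪ L`; every non-center cluster has a unique representative in `D`. -/
def Dset (L : Type u) : Set (Cell L) :=
  {c | ∃ (a : L) (b : ExtCoord L), (b = ExtCoord.zero ∨ ∃ r : L, b = ExtCoord.pos r) ∧
    c.1 = (ExtCoord.pos a, b, ExtCoord.posInf)}

/-- Two cells lie in the same face quadrant (an image of `D` under a global rotation). -/
def SameQuadrant {L : Type u} (d d' : Cell L) : Prop :=
  ∃ g ∈ rotGroup L, d ∈ (fun c => g c) '' Dset L ∧ d' ∈ (fun c => g c) '' Dset L

/-! ### Coupled cells of the edged cube -/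

/-- Two cells of the edged cube are coupled if they occupy the same location but belong to
different faces (they are parts of a common edge or corner cubie). -/
def Coupled {L : Type u} (c c' : ECell L) : Prop := c.1.1 = c'.1.1 ∧ c.1.2 ≠ c'.1.2

/-- An edge cell: exactly two infinite coordinates. -/
def IsEdgeCell {L : Type u} (c : ECell L) : Prop := infCount c.1.1 = 2

/-- A corner cell: three infinite coordinates. -/
def IsCornerCell {L : Type u} (c : ECell L) : Prop := infCount c.1.1 = 3

/-- An edge-cross cell: an edge cell one of whose coordinates is `0`. -/
def IsEdgeCross {L : Type u} (c : ECell L) : Prop :=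
  IsEdgeCell c ∧ 0 < zeroCount c.1.1

open Order

theorem _root_.Ordinal.exists_lt_forall_of_finite {ι : Type*} {S : Set ι} (hS : S.Finite)
    {o : Ordinal.{v}} (ho : 0 < o) {P : ι → Ordinal.{v} → Prop}
    (h : ∀ i ∈ S, ∃ γ < o, ∀ ν, γ ≤ ν → ν < o → P i ν) :
    ∃ γ < o, ∀ i ∈ S, ∀ ν, γ ≤ ν → ν < o → P i ν := by
  choose! g hg using h
  refine ⟨hS.toFinset.sup g, (Finset.sup_lt_iff ho).2 fun i hi => (hg i (by simpa using hi)).1,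
    fun i hi ν hν hνo => (hg i hi).2 ν ((Finset.le_sup (by simpa using hi)).trans hν) hνo⟩

section Run

variable {Cl : Type v} {X : Type u}

theorem eventualVal_eq_some_iff {lam : Ordinal.{v}} {g : ∀ η, η < lam → Option X} {x : X} :
    eventualVal lam g = some x ↔ ∃ γ < lam, ∀ η (hη : η < lam), γ ≤ η → g η hη = some x := by
  classical
  constructor
  · intro h
    rw [eventualVal] at h
    split_ifs at h with hex
    obtain ⟨γ, hγ, hg⟩ := hex.choose_spec
    exact ⟨γ, hγ, fun η hη hγη => (hg η hη hγη).trans (congrArg some (Option.some_injective _ h))⟩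
  · rintro ⟨γ, hγ, hg⟩
    have hex : ∃ x : X, ∃ γ, γ < lam ∧ ∀ η (hη : η < lam), γ ≤ η → g η hη = some x :=
      ⟨x, γ, hγ, hg⟩
    rw [eventualVal, dif_pos hex]
    obtain ⟨γ', hγ', hg'⟩ := hex.choose_spec
    have hmax : max γ γ' < lam := max_lt hγ hγ'
    exact (hg' _ hmax (le_max_right _ _)).symm.trans (hg _ hmax (le_max_left _ _))

theorem eventualVal_congr {lam γ : Ordinal.{v}} (hγ : γ < lam) {g g' : ∀ η, η < lam → Option X}
    (h : ∀ η (hη : η < lam), γ ≤ η → g η hη = g' η hη) :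
    eventualVal lam g = eventualVal lam g' := by
  have key : ∀ {g g' : ∀ η, η < lam → Option X}, (∀ η (hη : η < lam), γ ≤ η → g η hη = g' η hη) →
      ∀ x, eventualVal lam g = some x → eventualVal lam g' = some x := by
    intro g g' h x hx
    obtain ⟨γ', hγ', hg⟩ := eventualVal_eq_some_iff.1 hx
    refine eventualVal_eq_some_iff.2 ⟨max γ γ', max_lt hγ hγ', fun η hη hle => ?_⟩
    rw [← h η hη (le_of_max_le_left hle), hg η hη (le_of_max_le_right hle)]
  exact Option.ext fun x => ⟨key h x, key (fun η hη hle => (h η hη hle).symm) x⟩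

theorem eventualVal_const {lam : Ordinal.{v}} (hlam : 0 < lam) (o : Option X) :
    eventualVal lam (fun _ _ => o) = o := by
  refine Option.ext fun x => ?_
  rw [eventualVal_eq_some_iff]
  exact ⟨fun ⟨γ, hγ, h⟩ => h γ hγ le_rfl, fun h => ⟨0, hlam, fun _ _ _ => h⟩⟩

variable (σ : Ordinal.{v} → Equiv.Perm Cl) (f₀ : Cl → Option X)

@[simp] theorem run_zero : run σ f₀ 0 = f₀ :=
  Ordinal.limitRecOn_zero ..

theorem run_add_one (η : Ordinal.{v}) (c : Cl) :
    run σ f₀ (η + 1) c = run σ f₀ η ((σ η)⁻¹ c) := by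
  unfold run
  rw [Ordinal.limitRecOn_add_one]

theorem run_limit {lam : Ordinal.{v}} (hlam : IsSuccLimit lam) (c : Cl) :
    run σ f₀ lam c = eventualVal lam (fun η _ => run σ f₀ η c) := by
  unfold run
  rw [Ordinal.limitRecOn_limit _ _ _ _ hlam]

theorem run_eq_of_forall_apply_eq {γ θ : Ordinal.{v}} (hγθ : γ ≤ θ) {c : Cl}
    (hfix : ∀ η, γ ≤ η → η < θ → σ η c = c) : run σ f₀ θ c = run σ f₀ γ c := by
  induction θ using Ordinal.limitRecOn with
  | zero => rw [nonpos_iff_eq_zero.1 hγθ]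
  | add_one o ih =>
    rcases hγθ.eq_or_lt with rfl | hlt
    · rfl
    have hγo : γ ≤ o := Order.lt_add_one_iff.1 hlt
    have hc : (σ o)⁻¹ c = c := by
      rw [Equiv.Perm.inv_eq_iff_eq]; exact (hfix o hγo (lt_add_one o)).symm
    rw [run_add_one, hc, ih hγo fun η h1 h2 => hfix η h1 (h2.trans (lt_add_one o))]
  | limit o ho ih =>
    rcases hγθ.eq_or_lt with rfl | hlt
    · rfl
    rw [run_limit σ f₀ ho, eventualVal_congr hlt (g' := fun _ _ => run σ f₀ γ c)
      fun η hη hγη => ih η hη hγη fun ν h1 h2 => hfix ν h1 (h2.trans hη),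
      eventualVal_const ho.bot_lt]

/-- Running over the identity labelling records, for each cell, the cell it came from. -/
noncomputable def origin (θ : Ordinal.{v}) : Cl → Option Cl := run σ some θ

theorem origin_add_one (η : Ordinal.{v}) (c : Cl) :
    origin σ (η + 1) c = origin σ η ((σ η)⁻¹ c) :=
  run_add_one σ some η c

theorem origin_limit {lam : Ordinal.{v}} (hlam : IsSuccLimit lam) (c : Cl) :
    origin σ lam c = eventualVal lam (fun η _ => origin σ η c) :=
  run_limit σ some hlam c

theorem run_eq_of_origin_eq_some {θ : Ordinal.{v}} {c d : Cl} (h : origin σ θ c = some d) :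
    run σ f₀ θ c = f₀ d := by
  induction θ using Ordinal.limitRecOn generalizing c with
  | zero => rw [origin, run_zero] at h; rw [run_zero, Option.some_injective _ h]
  | add_one o ih => rw [origin_add_one] at h; rw [run_add_one, ih h]
  | limit o ho ih =>
    rw [origin_limit σ ho] at h
    obtain ⟨γ, hγ, hst⟩ := eventualVal_eq_some_iff.1 h
    rw [run_limit σ f₀ ho, eventualVal_congr hγ (g' := fun _ _ => f₀ d)
      fun η hη hγη => ih η hη (hst η hη hγη), eventualVal_const ho.bot_lt]

theorem rel_of_origin_eq_some {R : Cl → Cl → Prop} {θ : Ordinal.{v}}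
    (hR : ∀ η < θ, ∀ c c', R c c' → R ((σ η)⁻¹ c) ((σ η)⁻¹ c')) {c c' d d' : Cl}
    (h : origin σ θ c = some d) (h' : origin σ θ c' = some d') (hcc' : R c c') : R d d' := by
  induction θ using Ordinal.limitRecOn generalizing c c' with
  | zero =>
    rw [origin, run_zero] at h h'
    rwa [← Option.some_injective _ h, ← Option.some_injective _ h']
  | add_one o ih =>
    rw [origin_add_one] at h h'
    exact ih (fun η hη => hR η (hη.trans (lt_add_one o))) h h' (hR o (lt_add_one o) c c' hcc')
  | limit o ho ih =>
    rw [origin_limit σ ho] at h h'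
    obtain ⟨γ, hγ, hst⟩ := eventualVal_eq_some_iff.1 h
    obtain ⟨γ', hγ', hst'⟩ := eventualVal_eq_some_iff.1 h'
    have hmax : max γ γ' < o := max_lt hγ hγ'
    exact ih _ hmax (fun η hη => hR η (hη.trans hmax)) (hst _ hmax (le_max_left _ _))
      (hst' _ hmax (le_max_right _ _)) hcc'

theorem origin_injective {θ : Ordinal.{v}} {c c' d : Cl} (h : origin σ θ c = some d)
    (h' : origin σ θ c' = some d) : c = c' := by
  by_contra hne
  exact rel_of_origin_eq_some σ (R := (· ≠ ·)) (fun η _ _ _ h => (σ η)⁻¹.injective.ne h) h h' hne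
    rfl

theorem isLegal_origin_of_finite {θ : Ordinal.{v}}
    (hfin : ∀ c, {η | η < θ ∧ σ η c ≠ c}.Finite) : IsLegal (origin σ θ) := by
  induction θ using Ordinal.limitRecOn with
  | zero => simp [IsLegal, origin]
  | add_one o ih =>
    intro c
    rw [origin_add_one]
    exact ih (fun c => (hfin c).subset fun η hη => ⟨hη.1.trans (lt_add_one o), hη.2⟩) _
  | limit o ho ih =>
    intro c
    obtain ⟨γ, hγ, hquiet⟩ := Ordinal.exists_lt_forall_of_finite (hfin c) ho.bot_lt
      (P := fun η ν => ν ≠ η) fun η hη =>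
        ⟨η + 1, ho.add_one_lt hη.1, fun ν hν _ => (Order.add_one_le_iff.1 hν).ne'⟩
    rw [origin, run_eq_of_forall_apply_eq σ some hγ.le fun η hγη hηo =>
      not_not.1 fun hmov => hquiet η ⟨hηo, hmov⟩ η hγη hηo rfl]
    exact ih γ hγ (fun c => (hfin c).subset fun η hη => ⟨hη.1.trans hγ, hη.2⟩) c

theorem origin_eq_none_of_frequently {lam : Ordinal.{v}} (hlam : IsSuccLimit lam)
    {π : Equiv.Perm Cl} (hfreq : ∀ γ < lam, ∃ η, γ ≤ η ∧ η < lam ∧ σ η = π) {c : Cl}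
    (hc : π c ≠ c) : origin σ lam c = none := by
  rw [origin_limit σ hlam, Option.eq_none_iff_forall_ne_some]
  intro d hd
  obtain ⟨γ, hγ, hst⟩ := eventualVal_eq_some_iff.1 hd
  obtain ⟨η, hγη, hη, rfl⟩ := hfreq γ hγ
  have hsucc := hst (η + 1) (hlam.add_one_lt hη) (hγη.trans le_self_add)
  rw [origin_add_one] at hsucc
  exact hc (Equiv.Perm.inv_eq_iff_eq.1 (origin_injective σ hsucc (hst η hη hγη))).symm

def FiniteBelow (θ : Ordinal.{v}) : Prop :=
  ∀ π : Equiv.Perm Cl, {η | η < θ ∧ σ η = π}.Finite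

theorem exists_isSuccLimit_of_not_finiteBelow {θ : Ordinal.{v}} (h : ¬ FiniteBelow σ θ) :
    ∃ lam ≤ θ, IsSuccLimit lam ∧ (∀ μ < lam, FiniteBelow σ μ) ∧
      ∃ π, ∀ γ < lam, ∃ η, γ ≤ η ∧ η < lam ∧ σ η = π := by
  obtain ⟨lam, hbad, hmin⟩ := wellFounded_lt.has_min {μ | ¬ FiniteBelow σ μ} ⟨θ, h⟩
  have hfin : ∀ μ < lam, FiniteBelow σ μ := fun μ hμ => not_not.1 fun hμ' => hmin μ hμ' hμ
  obtain ⟨π, hπ⟩ : ∃ π, {η | η < lam ∧ σ η = π}.Infinite := by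
    simpa [FiniteBelow] using hbad
  refine ⟨lam, not_lt.1 fun hθ => hmin θ h hθ, ?_, hfin, π, ?_⟩
  · rcases Ordinal.zero_or_succ_or_isSuccLimit lam with rfl | ⟨a, rfl⟩ | hlim
    · simp at hπ
    · refine absurd (((hfin a (Order.lt_succ a)) π).insert a |>.subset ?_) hπ
      rintro η ⟨hη, rfl⟩
      rcases (Order.lt_succ_iff.1 hη).eq_or_lt with rfl | hlt
      · exact Set.mem_insert η _
      · exact Set.mem_insert_of_mem _ ⟨hlt, rfl⟩
    · exact hlim
  · by_contra! ⟨γ, hγ, hnot⟩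
    refine hπ ((hfin γ hγ π).subset fun η ⟨hη, hπη⟩ => ⟨?_, hπη⟩)
    exact not_le.1 fun hγη => hnot η hγη hη hπη

theorem exists_run_eq_none_of_le {K : Type*} (W : Cl → K) (hW : ∀ c, {c' | W c' = W c}.Finite)
    {θ : Ordinal.{v}} (hσ : ∀ η < θ, ∀ c, W (σ η c) = W c) {μ : Ordinal.{v}} (hμ : μ ≤ θ)
    {c : Cl} (hc : run σ f₀ μ c = none) : ∃ c', W c' = W c ∧ run σ f₀ θ c' = none := by
  induction θ using Ordinal.limitRecOn with
  | zero => exact ⟨c, rfl, by rwa [nonpos_iff_eq_zero.1 hμ] at hc⟩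
  | add_one o ih =>
    rcases hμ.eq_or_lt with rfl | hlt
    · exact ⟨c, rfl, hc⟩
    obtain ⟨c', hWc', hc'⟩ :=
      ih (fun η hη => hσ η (hη.trans (lt_add_one o))) (Order.lt_add_one_iff.1 hlt)
    refine ⟨σ o c', (hσ o (lt_add_one o) c').trans hWc', ?_⟩
    simpa [run_add_one] using hc'
  | limit o ho ih =>
    rcases hμ.eq_or_lt with rfl | hlt
    · exact ⟨c, rfl, hc⟩
    by_contra! hlegal
    obtain ⟨γ, hγ, hst⟩ := Ordinal.exists_lt_forall_of_finite (hW c) ho.bot_lt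
      (P := fun c' ν => run σ f₀ ν c' ≠ none) fun c' hc' => by
        obtain ⟨x, hx⟩ := Option.ne_none_iff_exists'.1 (hlegal c' hc')
        rw [run_limit σ f₀ ho] at hx
        obtain ⟨γ, hγ, hst⟩ := eventualVal_eq_some_iff.1 hx
        exact ⟨γ, hγ, fun ν hγν hν => by simp [hst ν hν hγν]⟩
    have hν : max γ μ < o := max_lt hγ hlt
    obtain ⟨c', hWc', hc'⟩ :=
      ih _ hν (fun η hη => hσ η (hη.trans hν)) (le_max_right _ _)
    exact hst c' hWc' _ (le_max_left _ _) hν hc'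

theorem isLegal_run_of_le {K : Type*} (W : Cl → K) (hW : ∀ c, {c' | W c' = W c}.Finite)
    {θ : Ordinal.{v}} (hσ : ∀ η < θ, ∀ c, W (σ η c) = W c) (hθ : IsLegal (run σ f₀ θ))
    {μ : Ordinal.{v}} (hμ : μ ≤ θ) : IsLegal (run σ f₀ μ) := fun _ hc =>
  let ⟨c', _, hc'⟩ := exists_run_eq_none_of_le σ f₀ W hW hσ hμ hc
  hθ c' hc'

end Run

section EdgedCube

instance : Fintype Axis := ⟨{.x, .y, .z}, fun a => by cases a <;> simp⟩

variable {L : Type u}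

def rotCell (i : Axis) (c : ECell L) : ECell L :=
  ⟨(rot i c.1.1, tagMap i c.1.2), (isInfB_coord_tagMap_rot i c.1.2 c.1.1).trans c.2⟩

theorem iterate_rotCell_four (i : Axis) (c : ECell L) : (rotCell i)^[4] c = c := by
  show rotCell i (rotCell i (rotCell i (rotCell i c))) = c
  refine Subtype.ext ?_
  cases i <;> simp [rotCell, rot]

theorem iterate_rotCell_fst (i : Axis) (n : ℕ) (c : ECell L) :
    ((rotCell i)^[n] c).1.1 = (rot i)^[n] c.1.1 := by
  induction n with
  | zero => rfl
  | succ n ih => rw [Function.iterate_succ_apply', Function.iterate_succ_apply', ← ih]; rfl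

theorem coord_iterate_rotCell_self (i : Axis) (n : ℕ) (c : ECell L) :
    ((rotCell i)^[n] c).1.1.coord i = c.1.1.coord i := by
  induction n with
  | zero => rfl
  | succ n ih => rw [Function.iterate_succ_apply', ← ih]; exact coord_rot_self i _

open Classical in
theorem equarterTurn_apply (i : Axis) (α : ExtCoord L) (c : ECell L) :
    equarterTurn i α c = if c.1.1.coord i = α then rotCell i c else c := by
  refine Subtype.ext ?_
  show eqtFun i α c.1 = _
  unfold eqtFun
  split_ifs <;> rfl

open Classical in
theorem equarterTurn_pow_apply (i : Axis) (α : ExtCoord L) (n : ℕ) (c : ECell L) :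
    (equarterTurn i α ^ n) c = if c.1.1.coord i = α then (rotCell i)^[n] c else c := by
  induction n with
  | zero => simp
  | succ n ih =>
    rw [pow_succ', Equiv.Perm.mul_apply, ih]
    split_ifs with h
    · rw [equarterTurn_apply, if_pos ((coord_iterate_rotCell_self i n c).trans h),
        Function.iterate_succ_apply']
    · rw [equarterTurn_apply, if_neg h]

theorem equarterTurn_pow_four (i : Axis) (α : ExtCoord L) : equarterTurn i α ^ 4 = 1 := by
  ext1 c
  rw [equarterTurn_pow_apply, iterate_rotCell_four, ite_self, Equiv.Perm.one_apply]

theorem IsEBasic.exists_eq_pow {π : Equiv.Perm (ECell L)} (hπ : IsEBasic L π) :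
    ∃ i α, ∃ n, 0 < n ∧ n < 4 ∧ π = equarterTurn i α ^ n := by
  obtain ⟨i, α, rfl | rfl | rfl⟩ := hπ
  · exact ⟨i, α, 1, by norm_num, by norm_num, (pow_one _).symm⟩
  · exact ⟨i, α, 2, by norm_num, by norm_num, rfl⟩
  · refine ⟨i, α, 3, by norm_num, by norm_num, inv_eq_of_mul_eq_one_right ?_⟩
    rw [← pow_succ', equarterTurn_pow_four]

theorem IsEBasic.inv {π : Equiv.Perm (ECell L)} (hπ : IsEBasic L π) : IsEBasic L π⁻¹ := by
  obtain ⟨i, α, rfl | rfl | rfl⟩ := hπ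
  · exact ⟨i, α, Or.inr (Or.inr rfl)⟩
  · refine ⟨i, α, Or.inr (Or.inl (inv_eq_of_mul_eq_one_right ?_))⟩
    rw [← pow_add, equarterTurn_pow_four]
  · exact ⟨i, α, Or.inl (inv_inv _)⟩

theorem IsEBasic.exists_iterate {π : Equiv.Perm (ECell L)} (hπ : IsEBasic L π) (p : Triple L) :
    ∃ i n, ∀ c : ECell L, c.1.1 = p → π c = (rotCell i)^[n] c := by
  classical
  obtain ⟨i, α, n, -, -, rfl⟩ := hπ.exists_eq_pow
  by_cases hp : p.coord i = α
  · exact ⟨i, n, fun c hc => by rw [equarterTurn_pow_apply, if_pos (hc ▸ hp)]⟩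
  · exact ⟨i, 0, fun c hc => by rw [equarterTurn_pow_apply, if_neg (hc ▸ hp)]; rfl⟩

theorem IsEBasic.apply_eq_of_forall_rotCell {β : Type*} {f : ECell L → β}
    (hf : ∀ i c, f (rotCell i c) = f c) {π : Equiv.Perm (ECell L)} (hπ : IsEBasic L π)
    (c : ECell L) : f (π c) = f c := by
  obtain ⟨i, n, hn⟩ := hπ.exists_iterate c.1.1
  rw [hn c rfl]
  clear hn
  induction n with
  | zero => rfl
  | succ n ih => rw [Function.iterate_succ_apply', hf, ih]

theorem IsEBasic.rel_apply_of_forall_rotCell {R : ECell L → ECell L → Prop}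
    (hR : ∀ i c c', R c c' → R (rotCell i c) (rotCell i c'))
    (hloc : ∀ c c', R c c' → c.1.1 = c'.1.1)
    {π : Equiv.Perm (ECell L)} (hπ : IsEBasic L π) {c c' : ECell L} (h : R c c') :
    R (π c) (π c') := by
  obtain ⟨i, n, hn⟩ := hπ.exists_iterate c.1.1
  rw [hn c rfl, hn c' (hloc c c' h).symm]
  clear hn
  induction n with
  | zero => exact h
  | succ n ih => rw [Function.iterate_succ_apply', Function.iterate_succ_apply']; exact hR i _ _ ih

namespace ExtCoord

def unsigned : ExtCoord L → ExtCoord L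
  | .neg r => .pos r
  | .zero => .zero
  | .pos r => .pos r
  | .negInf => .posInf
  | .posInf => .posInf

def sign : ExtCoord L → SignType
  | .neg _ => -1
  | .zero => 0
  | .pos _ => 1
  | .negInf => -1
  | .posInf => 1

@[simp] theorem unsigned_reflect (a : ExtCoord L) : a.reflect.unsigned = a.unsigned := by
  cases a <;> rfl

@[simp] theorem sign_reflect (a : ExtCoord L) : a.reflect.sign = -a.sign := by
  cases a <;> rfl

theorem eq_or_eq_reflect_of_unsigned_eq {a b : ExtCoord L} (h : a.unsigned = b.unsigned) :
    a = b ∨ a = b.reflect := by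
  cases a <;> cases b <;> simp_all [unsigned, reflect]

theorem eq_of_unsigned_eq_of_sign_eq {a b : ExtCoord L} (h : a.unsigned = b.unsigned)
    (h' : a.sign = b.sign) : a = b := by
  cases a <;> cases b <;> simp_all [unsigned, sign]

theorem isInfB_iff {a : ExtCoord L} : a.isInfB = true ↔ a = .negInf ∨ a = .posInf := by
  cases a <;> simp [isInfB]

theorem sign_ne_zero_of_isInfB {a : ExtCoord L} (h : a.isInfB = true) : a.sign ≠ 0 := by
  cases a <;> simp_all [isInfB, sign]

end ExtCoord

def thirdAxis : Axis → Axis → Axis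
  | .x, .y => .z | .y, .x => .z
  | .y, .z => .x | .z, .y => .x
  | .z, .x => .y | .x, .z => .y
  | a, _ => a

/-- `1` exactly when `(t, k, thirdAxis t k)` is a cyclic order of `(x, y, z)`. -/
def axisSign : Axis → Axis → SignType
  | .x, .y | .y, .z | .z, .x => 1
  | _, _ => -1

theorem axis_eq_or_eq_or_eq_thirdAxis {t k : Axis} (h : t ≠ k) (w : Axis) :
    w = t ∨ w = k ∨ w = thirdAxis t k := by
  revert h; revert w k t; decide

theorem axisSign_ne_zero (t k : Axis) : axisSign t k ≠ 0 := by
  cases t <;> cases k <;> decide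

/-- For coupled cells with tags `t ≠ k` at `p`, the orientation of the frame
`(sign p_t • e_t, sign p_k • e_k, sign p_u • e_u)` with `u = thirdAxis t k`.  It tells apart the
wings at `(r, ∞, ∞)` and `(-r, ∞, ∞)`, which carry the same two colors. -/
def chirality (c c' : ECell L) : SignType :=
  (c.1.1.coord c.1.2).sign * (c.1.1.coord c'.1.2).sign *
    (c.1.1.coord (thirdAxis c.1.2 c'.1.2)).sign * axisSign c.1.2 c'.1.2

theorem chirality_rotCell (i : Axis) {c c' : ECell L} (h : c.1.2 ≠ c'.1.2) :
    chirality (rotCell i c) (rotCell i c') = chirality c c' := by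
  obtain ⟨⟨⟨a, b, d⟩, t⟩, hc⟩ := c
  obtain ⟨⟨p', k⟩, hc'⟩ := c'
  cases i <;> cases t <;> cases k <;>
    simp_all [chirality, rotCell, rot, tagMap, thirdAxis, axisSign, Triple.coord]

theorem coupled_rotCell (i : Axis) {c c' : ECell L} (h : Coupled c c') :
    Coupled (rotCell i c) (rotCell i c') :=
  ⟨congrArg (rot i) h.1, fun ht => h.2 (by simpa [rotCell] using congrArg (tagMap i) ht)⟩

def Triple.unsignedCoords (p : Triple L) : Multiset (ExtCoord L) :=
  {p.1.unsigned, p.2.1.unsigned, p.2.2.unsigned}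

theorem Triple.unsignedCoords_rot (i : Axis) (p : Triple L) :
    (rot i p).unsignedCoords = p.unsignedCoords := by
  classical
  obtain ⟨a, b, d⟩ := p
  cases i <;> ext <;>
    simp only [rot, unsignedCoords, ExtCoord.unsigned_reflect, Multiset.insert_eq_cons,
      Multiset.count_cons, Multiset.count_singleton] <;> ring

theorem Triple.unsignedCoords_eq {t k : Axis} (h : t ≠ k) (p : Triple L) :
    p.unsignedCoords =
      {(p.coord t).unsigned, (p.coord k).unsigned, (p.coord (thirdAxis t k)).unsigned} := by
  classical
  obtain ⟨a, b, d⟩ := p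
  cases t <;> cases k <;> (try exact absurd rfl h) <;> ext <;>
    simp only [unsignedCoords, coord, thirdAxis, Multiset.insert_eq_cons,
      Multiset.count_cons, Multiset.count_singleton] <;> ring

theorem Triple.ext_coord {p q : Triple L} (h : ∀ w, p.coord w = q.coord w) : p = q := by
  obtain ⟨a, b, d⟩ := p
  obtain ⟨a', b', d'⟩ := q
  simp only [Prod.mk.injEq]
  exact ⟨h .x, h .y, h .z⟩

theorem finite_setOf_unsignedCoords_eq (p : Triple L) :
    {c : ECell L | c.1.1.unsignedCoords = p.unsignedCoords}.Finite := by
  set T : Set (ExtCoord L) := {p.1, p.1.reflect, p.2.1, p.2.1.reflect, p.2.2, p.2.2.reflect}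
  have hT : ∀ a : ExtCoord L, a.unsigned ∈ p.unsignedCoords → a ∈ T := by
    intro a ha
    simp only [Triple.unsignedCoords, Multiset.insert_eq_cons, Multiset.mem_cons,
      Multiset.mem_singleton] at ha
    rcases ha with h | h | h <;>
      rcases ExtCoord.eq_or_eq_reflect_of_unsigned_eq h with rfl | rfl <;>
      simp [T]
  refine ((T.toFinite.prod (T.toFinite.prod T.toFinite)).prod (Set.finite_univ (α := Axis))
    |>.preimage Subtype.val_injective.injOn).subset fun c hc => ?_
  refine ⟨⟨hT _ ?_, hT _ ?_, hT _ ?_⟩, Set.mem_univ _⟩ <;> rw [← hc] <;>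
    simp [Triple.unsignedCoords]

theorem faceColor_inj_iff {a a' : Axis} {b b' : Bool} :
    faceColor a b = faceColor a' b' ↔ a = a' ∧ b = b' := by
  cases a <;> cases b <;> cases a' <;> cases b' <;> decide

open Classical in
theorem efSolved_eq_some (c : ECell L) :
    efSolved L c = some (faceColor c.1.2 (decide (c.1.1.coord c.1.2 = .posInf))) := by
  unfold efSolved
  split_ifs <;> simp_all

theorem efSolved_eq_efSolved_iff {c d : ECell L} :
    efSolved L c = efSolved L d ↔ c.1.2 = d.1.2 ∧ c.1.1.coord c.1.2 = d.1.1.coord d.1.2 := by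
  rw [efSolved_eq_some, efSolved_eq_some, Option.some_inj, faceColor_inj_iff]
  refine and_congr_right fun _ => ?_
  rcases ExtCoord.isInfB_iff.1 c.2 with h | h <;> rcases ExtCoord.isInfB_iff.1 d.2 with h' | h' <;>
    simp [h, h']

/- The colors fix the two tags and the two infinite coordinates; the remaining coordinate is then
fixed up to sign by `unsignedCoords` and its sign by the chirality. -/
theorem Coupled.eq_of_efSolved_eq {c₁ c₂ d₁ d₂ : ECell L} (hc : Coupled c₁ c₂)
    (hd : Coupled d₁ d₂) (hu : c₁.1.1.unsignedCoords = d₁.1.1.unsignedCoords)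
    (hχ : chirality c₁ c₂ = chirality d₁ d₂) (h₁ : efSolved L c₁ = efSolved L d₁)
    (h₂ : efSolved L c₂ = efSolved L d₂) : c₁ = d₁ := by
  obtain ⟨ht, e₁⟩ := efSolved_eq_efSolved_iff.1 h₁
  obtain ⟨hk, e₂⟩ := efSolved_eq_efSolved_iff.1 h₂
  rw [← ht] at e₁
  rw [← hk, ← hc.1, ← hd.1] at e₂
  rw [chirality, chirality, ← ht, ← hk, e₁, e₂] at hχ
  have hsign := mul_left_cancel₀ (mul_ne_zero (ExtCoord.sign_ne_zero_of_isInfB (e₁ ▸ c₁.2))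
    (ExtCoord.sign_ne_zero_of_isInfB (e₂ ▸ hc.1 ▸ c₂.2)))
    (mul_right_cancel₀ (axisSign_ne_zero _ _) hχ)
  rw [Triple.unsignedCoords_eq hc.2, Triple.unsignedCoords_eq hc.2, e₁, e₂] at hu
  have habs := Multiset.singleton_inj.1
    ((Multiset.cons_inj_right _).1 ((Multiset.cons_inj_right _).1 hu))
  refine Subtype.ext (Prod.ext (Triple.ext_coord fun w => ?_) ht)
  rcases axis_eq_or_eq_or_eq_thirdAxis hc.2 w with rfl | rfl | rfl
  · exact e₁
  · exact e₂
  · exact ExtCoord.eq_of_unsigned_eq_of_sign_eq habs hsign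

theorem finite_setOf_isEBasic_apply_ne (c : ECell L) :
    {π | IsEBasic L π ∧ π c ≠ c}.Finite := by
  classical
  refine (Set.finite_range fun x : Axis × Fin 4 =>
    equarterTurn x.1 (c.1.1.coord x.1) ^ (x.2 : ℕ)).subset ?_
  rintro π ⟨hπ, hmov⟩
  obtain ⟨i, α, n, -, hn, rfl⟩ := hπ.exists_eq_pow
  have hα : c.1.1.coord i = α := by
    by_contra h
    rw [equarterTurn_pow_apply, if_neg h] at hmov
    exact hmov rfl
  exact ⟨(i, ⟨n, hn⟩), by simp [hα]⟩

theorem IsEBasic.exists_coupled_apply_ne {π : Equiv.Perm (ECell L)} (hπ : IsEBasic L π) :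
    ∃ c c', Coupled c c' ∧ π c ≠ c := by
  classical
  obtain ⟨i, α, n, hn0, hn4, rfl⟩ := hπ.exists_eq_pow
  obtain ⟨c, c', hcc', hc, hmov⟩ : ∃ c c' : ECell L, Coupled c c' ∧ c.1.1.coord i = α ∧
      ∀ n, 0 < n → n < 4 → (rot i)^[n] c.1.1 ≠ c.1.1 := by
    cases i
    · exact ⟨⟨((α, .posInf, .posInf), .y), rfl⟩, ⟨((α, .posInf, .posInf), .z), rfl⟩,
        ⟨rfl, by simp⟩, rfl, fun n h0 h4 => by
          interval_cases n <;> simp [rot, ExtCoord.reflect]⟩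
    · exact ⟨⟨((.posInf, α, .posInf), .z), rfl⟩, ⟨((.posInf, α, .posInf), .x), rfl⟩,
        ⟨rfl, by simp⟩, rfl, fun n h0 h4 => by
          interval_cases n <;> simp [rot, ExtCoord.reflect]⟩
    · exact ⟨⟨((.posInf, .posInf, α), .x), rfl⟩, ⟨((.posInf, .posInf, α), .y), rfl⟩,
        ⟨rfl, by simp⟩, rfl, fun n h0 h4 => by
          interval_cases n <;> simp [rot, ExtCoord.reflect]⟩
  refine ⟨c, c', hcc', fun h => hmov n hn0 hn4 ?_⟩
  rw [equarterTurn_pow_apply, if_pos hc] at h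
  rw [← iterate_rotCell_fst, h]

theorem finite_setOf_apply_ne_of_finiteBelow {σ : Ordinal.{u} → Equiv.Perm (ECell L)}
    {θ : Ordinal.{u}} (hσ : ∀ η < θ, IsEBasic L (σ η)) (h : FiniteBelow σ θ) (c : ECell L) :
    {η | η < θ ∧ σ η c ≠ c}.Finite :=
  ((finite_setOf_isEBasic_apply_ne c).biUnion fun π _ => h π).subset
    fun η ⟨hη, hmov⟩ => Set.mem_biUnion ⟨hσ η hη, hmov⟩ ⟨hη, rfl⟩

theorem origin_ne_none_of_coupled {σ : Ordinal.{u} → Equiv.Perm (ECell L)} {lam : Ordinal.{u}}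
    (hlam : IsSuccLimit lam) (hσ : ∀ η < lam, IsEBasic L (σ η))
    (horigin : ∀ η < lam, IsLegal (origin σ η)) (hsolved : IsLegal (run σ (efSolved L) lam))
    {c c' : ECell L} (hcc' : Coupled c c') : origin σ lam c ≠ none := by
  obtain ⟨γ, hγ, hcolor⟩ := Ordinal.exists_lt_forall_of_finite (Set.toFinite {c, c'})
    hlam.bot_lt (P := fun e ν => run σ (efSolved L) ν e = run σ (efSolved L) lam e)
    fun e _ => by
      obtain ⟨x, hx⟩ := Option.ne_none_iff_exists'.1 (hsolved e)
      rw [hx]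
      rw [run_limit σ (efSolved L) hlam] at hx
      obtain ⟨γ, hγ, hst⟩ := eventualVal_eq_some_iff.1 hx
      exact ⟨γ, hγ, fun ν hγν hν => hst ν hν hγν⟩
  set R : ECell L → ECell L → Prop := fun a a' => Coupled a a' ∧
    a.1.1.unsignedCoords = c.1.1.unsignedCoords ∧ chirality a a' = chirality c c'
  have hR : ∀ η < lam, ∀ a a', R a a' → R ((σ η)⁻¹ a) ((σ η)⁻¹ a') := fun η hη a a' =>
    (hσ η hη).inv.rel_apply_of_forall_rotCell (fun i a a' ⟨haa', hu, hχ⟩ =>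
      ⟨coupled_rotCell i haa', (Triple.unsignedCoords_rot i _).trans hu,
        (chirality_rotCell i haa'.2).trans hχ⟩) fun _ _ h => h.1.1
  obtain ⟨d, hd⟩ := Option.ne_none_iff_exists'.1 (horigin γ hγ c)
  obtain ⟨d', hd'⟩ := Option.ne_none_iff_exists'.1 (horigin γ hγ c')
  have hRd := rel_of_origin_eq_some σ (fun η hη => hR η (hη.trans hγ)) hd hd' ⟨hcc', rfl, rfl⟩
  -- From stage `γ` on, the origins of `c, c'` form coupled pairs with the same invariants and
  -- the same solved colors, so they no longer change.
  suffices h : ∀ ν, γ ≤ ν → ν < lam → origin σ ν c = some d by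
    rw [origin_limit σ hlam, eventualVal_eq_some_iff.2 ⟨γ, hγ, fun ν hν hγν => h ν hγν hν⟩]
    exact Option.some_ne_none d
  intro ν hγν hν
  obtain ⟨e, he⟩ := Option.ne_none_iff_exists'.1 (horigin ν hν c)
  obtain ⟨e', he'⟩ := Option.ne_none_iff_exists'.1 (horigin ν hν c')
  have hRe := rel_of_origin_eq_some σ (fun η hη => hR η (hη.trans hν)) he he' ⟨hcc', rfl, rfl⟩
  have hsolved_eq : ∀ a ∈ ({c, c'} : Set (ECell L)), ∀ {b b'}, origin σ ν a = some b →
      origin σ γ a = some b' → efSolved L b = efSolved L b' := fun a ha b b' hb hb' => by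
    rw [← run_eq_of_origin_eq_some σ (efSolved L) hb, ← run_eq_of_origin_eq_some σ (efSolved L) hb',
      hcolor a ha ν hγν hν, hcolor a ha γ le_rfl hγ]
  rw [he, hRe.1.eq_of_efSolved_eq hRd.1 (hRe.2.1.trans hRd.2.1.symm) (hRe.2.2.trans hRd.2.2.symm)
    (hsolved_eq c (by simp) he hd) (hsolved_eq c' (by simp) he' hd')]

theorem isLegal_efSolved : IsLegal (efSolved L) := fun c => by
  rw [efSolved_eq_some]
  exact Option.some_ne_none _

namespace TwistSeq

universe w

variable (s : EBasicSeq L)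

theorem convOver_of_twistFinite (h : s.TwistFinite) {X : Type w} {f₀ : ECell L → Option X}
    (hf₀ : IsLegal f₀) : s.ConvOver f₀ := fun c => by
  obtain ⟨d, hd⟩ := Option.ne_none_iff_exists'.1 <| isLegal_origin_of_finite s.seq
    (finite_setOf_apply_ne_of_finiteBelow s.basic h) c
  rw [terminal, run_eq_of_origin_eq_some s.seq f₀ hd]
  exact hf₀ d

theorem isLegal_run_of_convOver {X : Type w} {f₀ : ECell L → Option X} (h : s.ConvOver f₀)
    {μ : Ordinal.{u}} (hμ : μ ≤ s.len) : IsLegal (run s.seq f₀ μ) :=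
  isLegal_run_of_le s.seq f₀ (fun c => c.1.1.unsignedCoords)
    (fun c => finite_setOf_unsignedCoords_eq c.1.1)
    (fun η hη => (s.basic η hη).apply_eq_of_forall_rotCell (f := fun c => c.1.1.unsignedCoords)
      fun i c => Triple.unsignedCoords_rot i c.1.1)
    h hμ

theorem exists_isSuccLimit_origin_eq_none (h : ¬ s.TwistFinite) :
    ∃ lam ≤ s.len, IsSuccLimit lam ∧ (∀ η < lam, IsLegal (origin s.seq η)) ∧
      ∃ c c', Coupled c c' ∧ origin s.seq lam c = none := by
  obtain ⟨lam, hle, hlam, hfin, π, hfreq⟩ := exists_isSuccLimit_of_not_finiteBelow s.seq h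
  have hσ : ∀ η < lam, IsEBasic L (s.seq η) := fun η hη => s.basic η (hη.trans_le hle)
  obtain ⟨η, -, hη, rfl⟩ := hfreq 0 hlam.bot_lt
  obtain ⟨c, c', hcc', hmov⟩ := (hσ η hη).exists_coupled_apply_ne
  refine ⟨lam, hle, hlam, fun μ hμ => isLegal_origin_of_finite s.seq ?_, c, c', hcc',
    origin_eq_none_of_frequently s.seq hlam hfreq hmov⟩
  exact finite_setOf_apply_ne_of_finiteBelow (fun η hη => hσ η (hη.trans hμ)) (hfin μ hμ)

end TwistSeq

end EdgedCube

end InfRubik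

open InfRubik in
theorem edged_convergence_tfae_general {L : Type u} (s : EBasicSeq L) :
    (s.ConvOver (efSolved L) ↔ s.UnivConv) ∧ (s.UnivConv ↔ s.TwistFinite) := by
  by_cases h : s.TwistFinite
  · have hU : s.UnivConv := s.convOver_of_twistFinite h fun c => Option.some_ne_none c
    exact ⟨iff_of_true (s.convOver_of_twistFinite h isLegal_efSolved) hU, iff_of_true hU h⟩
  · obtain ⟨lam, hle, hlam, horigin, c, c', hcc', hc⟩ := s.exists_isSuccLimit_origin_eq_none h
    have hU : ¬ s.UnivConv := fun hU => s.isLegal_run_of_convOver hU hle c hc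
    have hS : ¬ s.ConvOver (efSolved L) := fun hS =>
      origin_ne_none_of_coupled hlam (fun η hη => s.basic η (hη.trans_le hle)) horigin
        (s.isLegal_run_of_convOver hS hle) hcc' hc
    exact ⟨iff_of_false hS hU, iff_of_false hU h⟩

open InfRubik in
/-- For the edged cube, convergence over the solved configuration, universal convergence,
and twist-finiteness coincide. -/
theorem edged_convergence_tfae {L : Type u} [Infinite L] (s : EBasicSeq L) :
    (s.ConvOver (efSolved L) ↔ s.UnivConv) ∧ (s.UnivConv ↔ s.TwistFinite) :=
  edged_convergence_tfae_general s
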